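/- arXiv:2307.06303 — 5 statements merged into one kernel-verified Lean document; each statement's English description precedes it below -/
import Mathlib

section
/- Let A be an n×n matrix over ℚ with irreducible characteristic polynomial f, and let p be a polynomial over ℚ. If there exists a rational matrix X with p(X) = A, then f(p(λ)) has a monic factor h(λ) of degree n in ℚ[λ]. -/
open Polynomial

theorem stmt0 (n : ℕ) (A : Matrix (Fin n) (Fin n) ℚ) (p : ℚ[X])
    (hf : Irreducible A.charpoly)
    (hX : ∃ X : Matrix (Fin n) (Fin n) ℚ, aeval X p = A) :
    ∃ h : ℚ[X], h.Monic ∧ h.natDegree = n ∧ h ∣ A.charpoly.comp p := by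
  obtain ⟨X, hXA⟩ := hX
  rcases Nat.eq_zero_or_pos n with hn | hn
  · exfalso
    apply hf.not_isUnit
    have h0 : A.charpoly.natDegree = 0 := by
      rw [Matrix.charpoly_natDegree_eq_dim, Fintype.card_fin, hn]
    have : A.charpoly = 1 := Polynomial.eq_one_of_monic_natDegree_zero A.charpoly_monic h0
    rw [this]; exact isUnit_one
  haveI : NeZero n := ⟨hn.ne'⟩
  have hXint : IsIntegral ℚ X := IsIntegral.of_finite ℚ X
  set m := minpoly ℚ X with hm
  have hmon : m.Monic := minpoly.monic hXint
  have hdvd : m ∣ A.charpoly.comp p := by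
    apply minpoly.dvd
    rw [aeval_comp, hXA, Matrix.aeval_self_charpoly]
  have hle : m.natDegree ≤ n := by
    have := Polynomial.natDegree_le_of_dvd (Matrix.minpoly_dvd_charpoly X)
      X.charpoly_monic.ne_zero
    rwa [Matrix.charpoly_natDegree_eq_dim, Fintype.card_fin] at this
  have hge : n ≤ m.natDegree := by
    haveI : Module.Finite ℚ (AdjoinRoot m) :=
      Module.Finite.of_basis (AdjoinRoot.powerBasis' hmon).basis
    set a : AdjoinRoot m := Polynomial.aeval (AdjoinRoot.root m) p with ha
    have haint : IsIntegral ℚ a := IsIntegral.of_finite ℚ a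
    have hminA : minpoly ℚ A = A.charpoly := Eq.symm <|
      minpoly.eq_of_irreducible_of_monic hf (Matrix.aeval_self_charpoly A) A.charpoly_monic
    have h1 : (minpoly ℚ A).natDegree = n := by
      rw [hminA, Matrix.charpoly_natDegree_eq_dim, Fintype.card_fin]
    have h2 : minpoly ℚ A ∣ minpoly ℚ a := by
      apply minpoly.dvd
      have hdvd2 : m ∣ (minpoly ℚ a).comp p := by
        rw [← AdjoinRoot.mk_eq_zero, ← AdjoinRoot.aeval_eq, aeval_comp, ← ha]
        exact minpoly.aeval ℚ a
      obtain ⟨q, hq⟩ := hdvd2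
      rw [← hXA, ← aeval_comp, hq, map_mul]
      rw [show Polynomial.aeval X m = 0 from minpoly.aeval ℚ X, zero_mul]
    have h3 : (minpoly ℚ a).natDegree ≤ Module.finrank ℚ (AdjoinRoot m) := by
      have e1 : (minpoly ℚ a).natDegree
          = Module.finrank ℚ (Algebra.adjoin ℚ ({a} : Set (AdjoinRoot m))) := by
        rw [(Algebra.adjoin.powerBasis haint).finrank, Algebra.adjoin.powerBasis_dim]
      rw [e1]
      exact Submodule.finrank_le (Subalgebra.toSubmodule (Algebra.adjoin ℚ {a}))
    have h4 : Module.finrank ℚ (AdjoinRoot m) = m.natDegree :=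
      (AdjoinRoot.powerBasis' hmon).finrank
    calc n = (minpoly ℚ A).natDegree := h1.symm
      _ ≤ (minpoly ℚ a).natDegree :=
        Polynomial.natDegree_le_of_dvd h2 (minpoly.ne_zero haint)
      _ ≤ Module.finrank ℚ (AdjoinRoot m) := h3
      _ = m.natDegree := h4
  exact ⟨m, hmon, le_antisymm hle hge, hdvd⟩
end

section
/- Let A be an n×n matrix over ℚ with irreducible characteristic polynomial f, and let p ∈ ℚ[λ]. If f(p(λ)) has a factor h(λ) of degree n in ℚ[λ], then there exists X ∈ M_n(ℚ) with p(X) = A. -/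
/-!
Let `t` be the class of `λ` in `R = ℚ[λ]/(h)`. Since `h ∣ f ∘ p`, `p(t)` is a root of `f`, so
multiplication by `p(t)` on the `n`-dimensional space `R` and `A` on `ℚⁿ` are both annihilated by
the irreducible `f`. Both spaces thereby become vector spaces over the field `ℚ[λ]/(f)`, of equal
dimension, hence isomorphic: `A` is conjugate to multiplication by `p(t)`, and the same conjugate
of multiplication by `t` is the required `X`.
-/

open Polynomial Module

-- Unlike `AdjoinRoot.liftAlgHom`, the target need not be commutative.
noncomputable def AdjoinRoot.liftOfAevalEqZero {R A : Type*} [CommRing R] [Semiring A] [Algebra R A]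
    (f : R[X]) (x : A) (hx : aeval x f = 0) : AdjoinRoot f →ₐ[R] A :=
  Ideal.Quotient.liftₐ (Ideal.span {f}) (aeval x) fun g hg => by
    obtain ⟨c, rfl⟩ := Ideal.mem_span_singleton'.mp hg
    rw [map_mul, hx, mul_zero]

@[simp]
theorem AdjoinRoot.liftOfAevalEqZero_root {R A : Type*} [CommRing R] [Semiring A] [Algebra R A]
    (f : R[X]) (x : A) (hx : aeval x f = 0) : liftOfAevalEqZero f x hx (root f) = x :=
  (Ideal.Quotient.liftₐ_apply _ _ _ _).trans (aeval_X x)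

theorem LinearEquiv.exists_conjAlgEquiv_comp_eq {K L V W : Type*} [Field K] [Field L] [Algebra K L]
    [FiniteDimensional K L] [AddCommGroup V] [Module K V] [FiniteDimensional K V]
    [AddCommGroup W] [Module K W] [FiniteDimensional K W]
    (φ : L →ₐ[K] End K V) (ψ : L →ₐ[K] End K W) (hdim : finrank K V = finrank K W) :
    ∃ e : V ≃ₗ[K] W, (e.conjAlgEquiv K).toAlgHom.comp φ = ψ := by
  let _ : Module L V := Module.compHom V φ.toRingHom
  have : IsScalarTower K L V := ⟨fun c a v => by
    show φ (c • a) v = c • φ a v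
    simp⟩
  let _ : Module L W := Module.compHom W ψ.toRingHom
  have : IsScalarTower K L W := ⟨fun c a w => by
    show ψ (c • a) w = c • ψ a w
    simp⟩
  have : FiniteDimensional L V := .of_restrictScalars_finite K L V
  have : FiniteDimensional L W := .of_restrictScalars_finite K L W
  have hdimL : finrank L V = finrank L W := by
    refine Nat.eq_of_mul_eq_mul_left (finrank_pos (R := K) (M := L)) ?_
    rw [finrank_mul_finrank, finrank_mul_finrank, hdim]
  let e := LinearEquiv.ofFinrankEq V W hdimL
  refine ⟨e.restrictScalars K, AlgHom.ext fun a => LinearMap.ext fun w => ?_⟩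
  show e (a • e.symm w) = a • w
  rw [map_smul, e.apply_symm_apply]

theorem Module.End.exists_conj_eq_of_aeval_eq_zero {K V W : Type*} [Field K]
    [AddCommGroup V] [Module K V] [FiniteDimensional K V]
    [AddCommGroup W] [Module K W] [FiniteDimensional K W]
    {f : K[X]} (hf : Irreducible f) {S : End K V} {T : End K W}
    (hS : aeval S f = 0) (hT : aeval T f = 0) (hdim : finrank K V = finrank K W) :
    ∃ e : V ≃ₗ[K] W, e.conjAlgEquiv K S = T := by
  have := Fact.mk hf
  have : FiniteDimensional K (AdjoinRoot f) := (AdjoinRoot.powerBasis hf.ne_zero).finite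
  obtain ⟨e, he⟩ := LinearEquiv.exists_conjAlgEquiv_comp_eq
    (AdjoinRoot.liftOfAevalEqZero f S hS) (AdjoinRoot.liftOfAevalEqZero f T hT) hdim
  refine ⟨e, ?_⟩
  simpa using congr($he (AdjoinRoot.root f))

theorem stmt1 (n : ℕ) (A : Matrix (Fin n) (Fin n) ℚ) (p : ℚ[X])
    (hf : Irreducible A.charpoly)
    (h : ℚ[X]) (hdeg : h.natDegree = n) (hdvd : h ∣ A.charpoly.comp p) :
    ∃ X : Matrix (Fin n) (Fin n) ℚ, aeval X p = A := by
  set t := AdjoinRoot.root h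
  have hfinrank : finrank ℚ (AdjoinRoot h) = n :=
    finrank_quotient_span_eq_natDegree.trans hdeg
  have : FiniteDimensional ℚ (AdjoinRoot h) := Module.finite_of_finrank_pos <| by
    rw [hfinrank, ← A.charpoly_natDegree_eq_dim.trans (Fintype.card_fin n)]
    exact hf.natDegree_pos
  have hpt : aeval (aeval t p) A.charpoly = 0 := by
    rw [← aeval_comp, AdjoinRoot.aeval_eq, AdjoinRoot.mk_eq_zero]
    exact hdvd
  obtain ⟨e, he⟩ := Module.End.exists_conj_eq_of_aeval_eq_zero hf
    (S := Algebra.lmul ℚ (AdjoinRoot h) (aeval t p)) (T := Matrix.toLinAlgEquiv' A)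
    (by rw [aeval_algHom_apply, hpt, map_zero])
    (by rw [aeval_algHom_apply, Matrix.aeval_self_charpoly, map_zero])
    (by rw [hfinrank, finrank_fin_fun])
  refine ⟨Matrix.toLinAlgEquiv'.symm (e.conjAlgEquiv ℚ (Algebra.lmul ℚ _ t)), ?_⟩
  rw [aeval_algHom_apply, aeval_algHom_apply, aeval_algHom_apply, he]
  exact Matrix.toLinAlgEquiv'.symm_apply_apply A
end

section
/- Let A be an n×n matrix over ℚ with irreducible characteristic polynomial f, and let p ∈ ℚ[λ]. If f(p(λ)) has a factor h(λ) of degree n in ℚ[λ], then there exists an eigenvalue μ of A (a root of f in an algebraic closure of ℚ) and an element γ ∈ ℚ(μ) such that p(γ) = μ. -/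
/-! Take a root `γ` of `h` and put `μ = p(γ)`; then `f(μ) = 0` because `h ∣ f ∘ p`.
Clearly `ℚ(μ) ≤ ℚ(γ)`, while `[ℚ(γ) : ℚ] ≤ deg h = deg f = [ℚ(μ) : ℚ]` since `f` is irreducible,
so the two fields coincide and `γ ∈ ℚ(μ)`. -/

open Polynomial IntermediateField

namespace IntermediateField

variable {K L : Type*} [Field K] [Field L] [Algebra K L]

theorem adjoin_simple_aeval_le (γ : L) (p : K[X]) : K⟮aeval γ p⟯ ≤ K⟮γ⟯ :=
  adjoin_simple_le_iff.mpr (algebra_adjoin_le_adjoin K {γ} (aeval_mem_adjoin_singleton K γ))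

theorem finrank_adjoin_simple_of_irreducible {f : K[X]} (hf : Irreducible f) {μ : L}
    (hμ : aeval μ f = 0) : Module.finrank K K⟮μ⟯ = f.natDegree := by
  have hμint : IsIntegral K μ := IsAlgebraic.isIntegral ⟨f, hf.ne_zero, hμ⟩
  rw [adjoin.finrank hμint, ← minpoly.eq_of_irreducible hf hμ,
    natDegree_mul_leadingCoeff_inv _ hf.ne_zero]

theorem finrank_adjoin_simple_le_natDegree {h : K[X]} (hh : h ≠ 0) {γ : L}
    (hγ : aeval γ h = 0) : Module.finrank K K⟮γ⟯ ≤ h.natDegree := by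
  rw [adjoin.finrank (IsAlgebraic.isIntegral ⟨h, hh, hγ⟩)]
  exact natDegree_le_of_dvd (minpoly.dvd K γ hγ) hh

theorem mem_adjoin_simple_aeval_of_natDegree_le {f p h : K[X]} (hf : Irreducible f) (hh : h ≠ 0)
    (hdeg : h.natDegree ≤ f.natDegree) {γ : L} (hγ : aeval γ h = 0)
    (hroot : aeval (aeval γ p) f = 0) : γ ∈ K⟮aeval γ p⟯ := by
  have : FiniteDimensional K K⟮γ⟯ := adjoin.finiteDimensional (IsAlgebraic.isIntegral ⟨h, hh, hγ⟩)
  have heq : K⟮aeval γ p⟯ = K⟮γ⟯ := eq_of_le_of_finrank_le (adjoin_simple_aeval_le γ p) <| by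
    rw [finrank_adjoin_simple_of_irreducible hf hroot]
    exact (finrank_adjoin_simple_le_natDegree hh hγ).trans hdeg
  exact heq ▸ mem_adjoin_simple_self K γ

end IntermediateField

theorem Polynomial.exists_root_mem_adjoin_aeval_eq_of_dvd_comp {K L : Type*} [Field K] [Field L]
    [Algebra K L] [IsAlgClosed L] {f p h : K[X]} (hf : Irreducible f)
    (hdeg : h.natDegree = f.natDegree) (hdvd : h ∣ f.comp p) :
    ∃ μ : L, aeval μ f = 0 ∧ ∃ γ ∈ K⟮μ⟯, aeval γ p = μ := by
  have hh : h ≠ 0 := by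
    rintro rfl
    exact hf.natDegree_pos.ne (by simpa using hdeg)
  obtain ⟨γ, hγ⟩ := IsAlgClosed.exists_aeval_eq_zero L h <| by
    rw [degree_eq_natDegree hh, hdeg]
    exact_mod_cast hf.natDegree_pos.ne'
  have hroot : aeval (aeval γ p) f = 0 := by
    rw [← aeval_comp]
    exact aeval_eq_zero_of_dvd_aeval_eq_zero hdvd hγ
  exact ⟨aeval γ p, hroot, γ, mem_adjoin_simple_aeval_of_natDegree_le hf hh hdeg.le hγ hroot, rfl⟩

theorem stmt2 (n : ℕ) (A : Matrix (Fin n) (Fin n) ℚ) (p : ℚ[X])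
    (hf : Irreducible A.charpoly)
    (h : ℚ[X]) (hdeg : h.natDegree = n) (hdvd : h ∣ A.charpoly.comp p) :
    ∃ μ : AlgebraicClosure ℚ, aeval μ A.charpoly = 0 ∧
      ∃ γ ∈ IntermediateField.adjoin ℚ {μ}, aeval γ p = μ :=
  exists_root_mem_adjoin_aeval_eq_of_dvd_comp hf
    (by rw [hdeg, A.charpoly_natDegree_eq_dim, Fintype.card_fin]) hdvd
end

section
/- The polynomial λ⁶ + 3 is irreducible over ℚ; consequently λ⁶ + 3 has no factor of degree 3 in ℚ[λ], and the matrix equation X² = A with A the companion matrix of λ³ + 3 has no solution X ∈ M₃(ℚ). -/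
/-!
`λ⁶ + 3` is Eisenstein at `3`, so it is irreducible over `ℤ` and, by Gauss's lemma, over `ℚ`;
in particular it has no factor of degree `3`. If `Y² = A` then `Y⁶ = A³ = -3`, so the minimal
polynomial of `Y` divides the irreducible `λ⁶ + 3` and therefore has degree `6`; but it also
divides the characteristic polynomial of `Y`, which has degree `3`.
-/

open Polynomial

theorem Polynomial.isEisensteinAt_X_pow_add_C {R : Type*} [CommRing R] [IsDomain R] {p : R}
    (hp : Prime p) {n : ℕ} (hn : n ≠ 0) :
    (X ^ n + C p : R[X]).IsEisensteinAt (Ideal.span {p}) := by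
  refine (monic_X_pow_add_C p hn).isEisensteinAt_of_mem_of_notMem ?_ (fun hk => ?_) ?_
  · rw [Ne, Ideal.span_singleton_eq_top]
    exact hp.not_isUnit
  · rw [natDegree_X_pow_add_C] at hk
    rw [coeff_add, coeff_X_pow, if_neg hk.ne, zero_add, coeff_C]
    split_ifs
    · exact Ideal.mem_span_singleton_self p
    · exact Ideal.zero_mem _
  · rw [Ideal.span_singleton_pow, Ideal.mem_span_singleton, coeff_add, coeff_X_pow,
      if_neg hn.symm, zero_add, coeff_C_zero, sq]
    intro h
    exact hp.not_isUnit (isUnit_of_dvd_one ((mul_dvd_mul_iff_left hp.ne_zero).1 (by simpa using h)))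

theorem Polynomial.irreducible_X_pow_add_C_of_prime {R K : Type*} [CommRing R] [IsDomain R]
    [IsIntegrallyClosed R] [Field K] [Algebra R K] [IsFractionRing R K] {p : R} (hp : Prime p)
    {n : ℕ} (hn : n ≠ 0) : Irreducible (X ^ n + C (algebraMap R K p)) := by
  have hmonic := monic_X_pow_add_C p hn
  have hirr : Irreducible (X ^ n + C p : R[X]) :=
    (isEisensteinAt_X_pow_add_C hp hn).irreducible
      ((Ideal.span_singleton_prime hp.ne_zero).2 hp) hmonic.isPrimitive
      (by rw [natDegree_X_pow_add_C]; exact Nat.pos_of_ne_zero hn)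
  simpa using (hmonic.irreducible_iff_irreducible_map_fraction_map (K := K)).1 hirr

theorem Polynomial.natDegree_eq_zero_or_eq_of_dvd_of_irreducible {K : Type*} [Field K]
    {f g : K[X]} (hf : Irreducible f) (hg : g ∣ f) :
    g.natDegree = 0 ∨ g.natDegree = f.natDegree := by
  obtain ⟨c, rfl⟩ := hg
  rcases hf.isUnit_or_isUnit rfl with hu | hu
  · exact Or.inl (natDegree_eq_zero_of_isUnit hu)
  · exact Or.inr (natDegree_eq_of_degree_eq
      (degree_eq_degree_of_associated (associated_mul_unit_right g c hu)))

theorem Matrix.natDegree_le_card_of_aeval_eq_zero_of_irreducible {n K : Type*} [Fintype n]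
    [DecidableEq n] [Nonempty n] [Field K] {f : K[X]} (hf : Irreducible f) {M : Matrix n n K}
    (hM : aeval M f = 0) : f.natDegree ≤ Fintype.card n := by
  rcases natDegree_eq_zero_or_eq_of_dvd_of_irreducible hf (minpoly.dvd K M hM) with h0 | hdeg
  · exact absurd h0 (minpoly.natDegree_pos (Matrix.isIntegral M)).ne'
  · rw [← hdeg, ← M.charpoly_natDegree_eq_dim]
    exact natDegree_le_of_dvd M.minpoly_dvd_charpoly M.charpoly_monic.ne_zero

theorem stmt12 :
    Irreducible (X ^ 6 + 3 : ℚ[X]) ∧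
    (¬ ∃ h : ℚ[X], h.natDegree = 3 ∧ h ∣ (X ^ 6 + 3 : ℚ[X])) ∧
    (¬ ∃ Y : Matrix (Fin 3) (Fin 3) ℚ,
      Y ^ 2 = !![0, 1, 0; 0, 0, 1; -3, 0, 0]) := by
  have hirr : Irreducible (X ^ 6 + 3 : ℚ[X]) := by
    simpa [map_ofNat] using
      irreducible_X_pow_add_C_of_prime (K := ℚ) Int.prime_three (n := 6) (by norm_num)
  have hdeg : (X ^ 6 + 3 : ℚ[X]).natDegree = 6 := by compute_degree!
  refine ⟨hirr, ?_, ?_⟩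
  · rintro ⟨h, h3, hdvd⟩
    rcases natDegree_eq_zero_or_eq_of_dvd_of_irreducible hirr hdvd with h0 | h6 <;> omega
  · rintro ⟨Y, hY⟩
    have hcube : (!![0, 1, 0; 0, 0, 1; -3, 0, 0] : Matrix (Fin 3) (Fin 3) ℚ) ^ 3 = -3 := by
      rw [pow_succ, sq]
      ext i j
      fin_cases i <;> fin_cases j <;>
        simp [Matrix.mul_apply, Fin.sum_univ_three, Matrix.ofNat_apply]
    have hroot : aeval Y (X ^ 6 + 3 : ℚ[X]) = 0 := by
      rw [map_add, map_pow, aeval_X, map_ofNat, show 6 = 2 * 3 from rfl, pow_mul, hY, hcube,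
        neg_add_cancel]
    have hle := Matrix.natDegree_le_card_of_aeval_eq_zero_of_irreducible hirr hroot
    rw [hdeg, Fintype.card_fin] at hle
    omega
end

section
/- Let p ∈ ℚ[λ] be a monic quadratic and f ∈ ℚ[λ] irreducible of degree n, and suppose that for every root μ of f (in an algebraic closure of ℚ) there exists γ ∈ ℚ(μ) with p(γ) = μ. Then the splitting field of f(p(λ)) over ℚ equals the splitting field of f over ℚ. -/
open Polynomial IntermediateField

theorem stmt16 (n : ℕ) (p f : ℚ[X]) (hp : p.Monic) (hpdeg : p.natDegree = 2)
    (hf : Irreducible f) (hn : f.natDegree = n)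
    (hsol : ∀ μ : AlgebraicClosure ℚ, aeval μ f = 0 →
      ∃ γ ∈ IntermediateField.adjoin ℚ {μ}, aeval γ p = μ) :
    IntermediateField.adjoin ℚ ((f.comp p).rootSet (AlgebraicClosure ℚ)) =
      IntermediateField.adjoin ℚ (f.rootSet (AlgebraicClosure ℚ)) := by
  have hf0 : f ≠ 0 := hf.ne_zero
  have hcoeff2 : p.coeff 2 = 1 := by
    have := hp.coeff_natDegree
    rwa [hpdeg] at this
  have expand : ∀ x : AlgebraicClosure ℚ, aeval x p =
      x ^ 2 + algebraMap ℚ _ (p.coeff 1) * x + algebraMap ℚ _ (p.coeff 0) := by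
    intro x
    rw [aeval_eq_sum_range, hpdeg]
    simp [Finset.sum_range_succ, hcoeff2, Algebra.smul_def]
    ring
  apply le_antisymm
  · rw [IntermediateField.adjoin_le_iff]
    intro α hα
    have hμ0 : aeval (aeval α p) f = 0 := by
      have := aeval_eq_zero_of_mem_rootSet hα
      rwa [aeval_comp] at this
    set μ := aeval α p with hμdef
    have hμroot : μ ∈ f.rootSet (AlgebraicClosure ℚ) := by
      rw [mem_rootSet]
      exact ⟨hf0, hμ0⟩
    obtain ⟨γ, hγ, hpγ⟩ := hsol μ hμ0
    have hle : IntermediateField.adjoin ℚ {μ} ≤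
        IntermediateField.adjoin ℚ (f.rootSet (AlgebraicClosure ℚ)) := by
      rw [IntermediateField.adjoin_simple_le_iff]
      exact IntermediateField.subset_adjoin ℚ _ hμroot
    have key : (α - γ) * (α + γ + algebraMap ℚ _ (p.coeff 1)) = 0 := by
      have h1 : aeval α p = aeval γ p := by rw [hpγ]
      rw [expand, expand] at h1
      ring_nf
      ring_nf at h1
      linear_combination h1
    rcases mul_eq_zero.mp key with h | h
    · have : α = γ := by linear_combination h
      rw [this]
      exact hle hγ
    · have : α = -γ - algebraMap ℚ _ (p.coeff 1) := by linear_combination h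
      rw [this]
      exact sub_mem (neg_mem (hle hγ)) (IntermediateField.algebraMap_mem _ _)
  · rw [IntermediateField.adjoin_le_iff]
    intro μ hμ
    have hμ0 : aeval μ f = 0 := aeval_eq_zero_of_mem_rootSet hμ
    obtain ⟨γ, hγ, hpγ⟩ := hsol μ hμ0
    have hcomp0 : f.comp p ≠ 0 := by
      intro h
      rcases (comp_eq_zero_iff).mp h with h | ⟨_, h⟩
      · exact hf0 h
      · have := congrArg natDegree h
        simp [hpdeg] at this
    have hγroot : γ ∈ (f.comp p).rootSet (AlgebraicClosure ℚ) := by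
      rw [mem_rootSet]
      refine ⟨hcomp0, ?_⟩
      rw [aeval_comp, hpγ, hμ0]
    have hγmem : γ ∈ IntermediateField.adjoin ℚ
        ((f.comp p).rootSet (AlgebraicClosure ℚ)) :=
      IntermediateField.subset_adjoin ℚ _ hγroot
    have : μ = γ ^ 2 + algebraMap ℚ _ (p.coeff 1) * γ + algebraMap ℚ _ (p.coeff 0) := by
      rw [← hpγ, expand]
    rw [this]
    refine add_mem (add_mem (pow_mem hγmem 2) ?_) (IntermediateField.algebraMap_mem _ _)
    exact mul_mem (IntermediateField.algebraMap_mem _ _) hγmem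
end
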